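/- (Central Sets Theorem.) Let (S,·) be a commutative semigroup, let e be a minimal idempotent in βS, and let A ∈ e. For each l ∈ ℕ let ⟨y_{l,n}⟩_{n=0}^∞ be a sequence in S. Then there exist a sequence ⟨a_n⟩_{n=0}^∞ in S and a sequence α_0 < α_1 < … in P_f(ω) such that for every g ∈ Φ one has FP(⟨a_n · ∏_{t∈α_n} y_{g(n),t}⟩_{n=0}^∞) ⊆ A. -/

import Mathlib

/- The semigroup structure on `βS = Ultrafilter S`, with
`A ∈ p * q ↔ {s | {t | s * t ∈ A} ∈ q} ∈ p`. -/
attribute [local instance] Ultrafilter.mul Ultrafilter.semigroup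

/-- The ordered product of a `Monoid`-valued function over a finite set of
natural-number indices, the factors being taken in increasing order of the indices. -/
def oListProd {M : Type*} [Monoid M] (f : ℕ → M) (α : Finset ℕ) : M :=
  ((α.sort (· ≤ ·)).map f).prod

/-- The ordered product `∏_{t ∈ α} f t` for a semigroup-valued `f`, computed in the
monoid `WithOne S`.  For nonempty `α` this is the genuine product (in increasing order
of indices) of the `f t ∈ S`, viewed in `WithOne S`. -/
def oProd {S : Type*} [Semigroup S] (f : ℕ → S) (α : Finset ℕ) : WithOne S :=
  oListProd (fun t => (f t : WithOne S)) α

/-- An ultrafilter `e ∈ βS` is a minimal idempotent iff `e * e = e` and every idempotent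
`f ∈ βS` with `f * e = e * f = f` equals `e`. -/
def IsMinimalIdempotent {S : Type*} [Semigroup S] (e : Ultrafilter S) : Prop :=
  e * e = e ∧ ∀ f : Ultrafilter S, f * f = f → f * e = f → e * f = f → f = e

/-!
For `m ∈ ℕ` let `E_m ⊆ (βS)^ℕ` consist of the tuples of principal ultrafilters
`(a · ∏_{t ∈ α} y l t)_l` with `min α > m`. The pointwise product of an element of `E_m` with an
element of `E_{max α}` lies in `E_m`, and constant tuples multiply `E_m` into itself on both sides.
Since right multiplication is continuous in `(βS)^ℕ`, and so is left multiplication by principal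
tuples, `E = ⋂_m cl E_m` is a compact subsemigroup with `E · ē ⊆ E` and `ē · E ⊆ E`, where
`ē = (e)_l` lies in the closure of the constant principal tuples. Minimality of `ē` in
`(βS)^ℕ` then forces `ē ∈ E`, so for every `B ∈ e` and `n, m` there are `a` and `α > m` with
`a · ∏_{t ∈ α} y l t ∈ B` for all `l ≤ n`.

The sequence is then chosen as in the proof of Hindman's theorem: with `C_0 = A`, pick
`(a_n, α_n)` for `B = C_n ∩ {s | s⁻¹C_n ∈ e}` and shrink to
`C_{n+1} = C_n ∩ ⋂_{l ≤ n} (a_n ∏_{t ∈ α_n} y l t)⁻¹ C_n ∈ e`; an ordered product whose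
smallest index is `n` then lies in `C_n`.
-/

open Filter Set

section OrderedProduct

variable {M : Type*} [Monoid M]

theorem oListProd_empty (f : ℕ → M) : oListProd f ∅ = 1 := by
  simp [oListProd]

theorem oListProd_singleton (f : ℕ → M) (t : ℕ) : oListProd f {t} = f t := by
  simp [oListProd]

theorem oListProd_insert_of_lt (f : ℕ → M) {t : ℕ} {α : Finset ℕ} (h : ∀ s ∈ α, t < s) :
    oListProd f (insert t α) = f t * oListProd f α := by
  rw [oListProd, Finset.sort_insert _ (fun s hs => (h s hs).le) fun ht => (h t ht).false]
  simp [oListProd]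

theorem oListProd_union (f : ℕ → M) {α β : Finset ℕ} (h : ∀ s ∈ α, ∀ t ∈ β, s < t) :
    oListProd f (α ∪ β) = oListProd f α * oListProd f β := by
  induction α using Finset.induction_on_min with
  | empty => simp [oListProd_empty]
  | insert a α ha ih =>
    have ha' : ∀ s ∈ α ∪ β, a < s := by
      simp only [Finset.mem_union]
      rintro s (hs | hs)
      exacts [ha s hs, h a (Finset.mem_insert_self a α) s hs]
    rw [Finset.insert_union, oListProd_insert_of_lt f ha', oListProd_insert_of_lt f ha,
      ih fun s hs => h s (Finset.mem_insert_of_mem hs), mul_assoc]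

theorem oListProd_mem_of_antitone {C : ℕ → Set M} {v : ℕ → M} (hC : Antitone C)
    (hv : ∀ n, v n ∈ C n) (hmul : ∀ n, ∀ x ∈ C (n + 1), v n * x ∈ C n) {β : Finset ℕ}
    (hβ : β.Nonempty) {n : ℕ} (hn : ∀ i ∈ β, n ≤ i) : oListProd v β ∈ C n := by
  induction β using Finset.induction_on_min generalizing n with
  | empty => exact absurd hβ Finset.not_nonempty_empty
  | insert a β ha ih =>
    rw [oListProd_insert_of_lt v ha]
    refine hC (hn a (Finset.mem_insert_self a β)) ?_
    rcases β.eq_empty_or_nonempty with rfl | hβ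
    · simpa [oListProd_empty] using hv a
    · exact hmul a _ (ih hβ ha)

end OrderedProduct

theorem oProd_singleton {S : Type*} [Semigroup S] (f : ℕ → S) (t : ℕ) :
    oProd f {t} = f t :=
  oListProd_singleton _ t

theorem oProd_union {S : Type*} [Semigroup S] (f : ℕ → S) {α β : Finset ℕ}
    (h : ∀ s ∈ α, ∀ t ∈ β, s < t) : oProd f (α ∪ β) = oProd f α * oProd f β :=
  oListProd_union _ h

namespace Ultrafilter

variable {M ι : Type*}

theorem pure_mul_pure [Mul M] (a b : M) : (pure a * pure b : Ultrafilter M) = pure (a * b) :=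
  coe_inj.mp <| Filter.ext' fun p => by simp [eventually_mul]

theorem continuous_pure_mul [Mul M] (a : M) : Continuous (pure a * · : Ultrafilter M → _) :=
  ultrafilterBasis_is_basis.continuous_iff.2 <| Set.forall_mem_range.mpr fun s ↦
    ultrafilter_isOpen_basic {m | a * m ∈ s}

theorem pure_comp_mul_pure_comp [Mul M] (c d : ι → M) :
    (pure ∘ c * pure ∘ d : ι → Ultrafilter M) = pure ∘ (c * d) :=
  funext fun i => pure_mul_pure (c i) (d i)

theorem continuous_pi_mul_left [Mul M] (q : ι → Ultrafilter M) :
    Continuous (· * q) :=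
  continuous_pi fun i => (continuous_mul_left (q i)).comp (continuous_apply i)

theorem continuous_pi_pure_comp_mul [Mul M] (c : ι → M) :
    Continuous ((pure ∘ c : ι → Ultrafilter M) * ·) :=
  continuous_pi fun i => (continuous_pure_mul (c i)).comp (continuous_apply i)

theorem const_mem_closure_range_const_pure (e : Ultrafilter M) :
    (fun _ : ι => e) ∈ closure (range fun b : M => fun _ : ι => (pure b : Ultrafilter M)) :=
  map_mem_closure (continuous_pi fun _ => continuous_id) (denseRange_pure e)
    (by rintro _ ⟨b, rfl⟩; exact ⟨b, rfl⟩)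

end Ultrafilter

theorem mul_mem_closure_of_forall_mem_closure {Y : Type*} [Mul Y] [TopologicalSpace Y]
    {U W : Set Y} {p q : Y} (hq : Continuous (· * q)) (hp : p ∈ closure U)
    (h : ∀ x ∈ U, x * q ∈ closure W) : p * q ∈ closure W :=
  closure_closure.subset (map_mem_closure (f := (· * q)) hq hp h)

theorem IsCompact.mem_of_minimal_idempotent {Y : Type*} [Semigroup Y] [TopologicalSpace Y]
    [T2Space Y] (hcont : ∀ q : Y, Continuous (· * q)) {E : Set Y} (hE : IsCompact E)
    (hne : E.Nonempty) (hmul : ∀ x ∈ E, ∀ z ∈ E, x * z ∈ E) {e : Y} (he : e * e = e)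
    (hmin : ∀ f : Y, f * f = f → f * e = f → e * f = f → f = e)
    (hEe : ∀ x ∈ E, x * e ∈ E) (heE : ∀ x ∈ E, e * x ∈ E) : e ∈ E := by
  obtain ⟨_, ⟨z, hz, rfl⟩, hidem⟩ := exists_idempotent_in_compact_subsemigroup hcont
    ((· * e) '' E) (hne.image _) (hE.image (hcont e)) (by
      rintro _ ⟨x, hx, rfl⟩ _ ⟨z, hz, rfl⟩
      exact ⟨x * e * z, hmul _ (hEe x hx) z hz, by simp only [mul_assoc]⟩)
  -- `f = z * e` is an idempotent of `E` with `f * e = f`, so `e * f` is an idempotent below `e`.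
  set f := z * e
  have hfe : f * e = f := by rw [mul_assoc, he]
  have hef : e * f = e := hmin (e * f)
    (by rw [mul_assoc, ← mul_assoc f, hfe, hidem]) (by rw [mul_assoc, hfe])
    (by rw [← mul_assoc, he])
  exact hef ▸ heE f (hEe z hz)

section CentralSets

open Ultrafilter

variable {S : Type*} [CommSemigroup S]

def termSeqs (y : ℕ → ℕ → S) (m : ℕ) : Set (ℕ → S) :=
  {c | ∃ (a : S) (α : Finset ℕ), α.Nonempty ∧ (∀ t ∈ α, m < t) ∧
    ∀ l, (c l : WithOne S) = a * oProd (y l) α}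

def termTuples (y : ℕ → ℕ → S) (m : ℕ) : Set (ℕ → Ultrafilter S) :=
  (pure ∘ ·) '' termSeqs y m

variable {y : ℕ → ℕ → S}

variable (y) in
theorem termSeqs_nonempty [Nonempty S] (m : ℕ) : (termSeqs y m).Nonempty := by
  obtain ⟨a⟩ := ‹Nonempty S›
  refine ⟨fun l => a * y l (m + 1), a, {m + 1}, Finset.singleton_nonempty _, ?_, fun l => ?_⟩
  · simp
  · rw [oProd_singleton, WithOne.coe_mul]

theorem termSeqs_succ_subset (m : ℕ) : termSeqs y (m + 1) ⊆ termSeqs y m :=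
  fun _ ⟨a, α, hne, hgt, hc⟩ => ⟨a, α, hne, fun t ht => (hgt t ht).trans' m.lt_succ_self, hc⟩

theorem exists_forall_mul_mem_termSeqs {m : ℕ} {c : ℕ → S} (hc : c ∈ termSeqs y m) :
    ∃ m', ∀ d ∈ termSeqs y m', c * d ∈ termSeqs y m := by
  obtain ⟨a, α, hne, hgt, hc⟩ := hc
  refine ⟨α.sup id, fun d ⟨b, β, _, hβ, hd⟩ => ?_⟩
  have hαβ : ∀ s ∈ α, ∀ t ∈ β, s < t := fun s hs t ht =>
    (Finset.le_sup (f := id) hs).trans_lt (hβ t ht)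
  obtain ⟨s, hs⟩ := hne
  refine ⟨a * b, α ∪ β, ⟨s, Finset.mem_union_left β hs⟩, ?_, fun l => ?_⟩
  · simp only [Finset.mem_union]
    rintro t (ht | ht)
    exacts [hgt t ht, (hgt s hs).trans (hαβ s hs t ht)]
  · rw [Pi.mul_apply, WithOne.coe_mul, hc, hd, oProd_union _ hαβ, WithOne.coe_mul,
      mul_mul_mul_comm]

theorem const_mul_mem_termSeqs {m : ℕ} (b : S) {c : ℕ → S} (hc : c ∈ termSeqs y m) :
    (fun _ => b) * c ∈ termSeqs y m := by
  obtain ⟨a, α, hne, hgt, hc⟩ := hc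
  refine ⟨b * a, α, hne, hgt, fun l => ?_⟩
  rw [Pi.mul_apply, WithOne.coe_mul, hc, WithOne.coe_mul, mul_assoc]

theorem mul_const_mem_termSeqs {m : ℕ} (b : S) {c : ℕ → S} (hc : c ∈ termSeqs y m) :
    c * (fun _ => b) ∈ termSeqs y m := by
  obtain ⟨a, α, hne, hgt, hc⟩ := hc
  refine ⟨a * b, α, hne, hgt, fun l => ?_⟩
  rw [Pi.mul_apply, WithOne.coe_mul, hc, WithOne.coe_mul, mul_right_comm]

theorem mul_mem_iInter_closure_termTuples {p q : ℕ → Ultrafilter S}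
    (hp : p ∈ ⋂ m, closure (termTuples y m)) (hq : q ∈ ⋂ m, closure (termTuples y m)) :
    p * q ∈ ⋂ m, closure (termTuples y m) := by
  refine mem_iInter.2 fun m => mul_mem_closure_of_forall_mem_closure (continuous_pi_mul_left q)
    (mem_iInter.1 hp m) ?_
  rintro _ ⟨c, hc, rfl⟩
  obtain ⟨m', hm'⟩ := exists_forall_mul_mem_termSeqs hc
  refine map_mem_closure (continuous_pi_pure_comp_mul c) (mem_iInter.1 hq m') ?_
  rintro _ ⟨d, hd, rfl⟩
  exact ⟨c * d, hm' d hd, (pure_comp_mul_pure_comp c d).symm⟩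

theorem mul_const_mem_iInter_closure_termTuples (e : Ultrafilter S) {p : ℕ → Ultrafilter S}
    (hp : p ∈ ⋂ m, closure (termTuples y m)) :
    p * (fun _ => e) ∈ ⋂ m, closure (termTuples y m) := by
  refine mem_iInter.2 fun m => mul_mem_closure_of_forall_mem_closure
    (continuous_pi_mul_left _) (mem_iInter.1 hp m) ?_
  rintro _ ⟨c, hc, rfl⟩
  refine map_mem_closure (continuous_pi_pure_comp_mul c) (const_mem_closure_range_const_pure e) ?_
  rintro _ ⟨b, rfl⟩
  exact ⟨c * fun _ => b, mul_const_mem_termSeqs b hc, (pure_comp_mul_pure_comp c _).symm⟩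

theorem const_mul_mem_iInter_closure_termTuples (e : Ultrafilter S) {q : ℕ → Ultrafilter S}
    (hq : q ∈ ⋂ m, closure (termTuples y m)) :
    (fun _ => e) * q ∈ ⋂ m, closure (termTuples y m) := by
  refine mem_iInter.2 fun m => mul_mem_closure_of_forall_mem_closure
    (continuous_pi_mul_left q) (const_mem_closure_range_const_pure e) ?_
  rintro _ ⟨b, rfl⟩
  refine map_mem_closure (continuous_pi_pure_comp_mul fun _ => b) (mem_iInter.1 hq m) ?_
  rintro _ ⟨d, hd, rfl⟩
  exact ⟨(fun _ => b) * d, const_mul_mem_termSeqs b hd, (pure_comp_mul_pure_comp _ d).symm⟩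

variable (y) in
theorem iInter_closure_termTuples_nonempty [Nonempty S] :
    (⋂ m, closure (termTuples y m)).Nonempty :=
  IsCompact.nonempty_iInter_of_sequence_nonempty_isCompact_isClosed _
    (fun m => closure_mono (image_mono (termSeqs_succ_subset m)))
    (fun m => ((termSeqs_nonempty y m).image _).closure) isClosed_closure.isCompact
    fun _ => isClosed_closure

variable (y) in
theorem const_mem_iInter_closure_termTuples [Nonempty S] {e : Ultrafilter S}
    (he : IsMinimalIdempotent e) :
    (fun _ => e) ∈ ⋂ m, closure (termTuples y m) :=
  (isClosed_iInter fun _ => isClosed_closure).isCompact.mem_of_minimal_idempotent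
    continuous_pi_mul_left (iInter_closure_termTuples_nonempty y)
    (fun _ hp _ hq => mul_mem_iInter_closure_termTuples hp hq) (funext fun _ => he.1)
    (fun f hff hfe hef => funext fun l =>
      he.2 (f l) (congrFun hff l) (congrFun hfe l) (congrFun hef l))
    (fun _ => mul_const_mem_iInter_closure_termTuples e)
    (fun _ => const_mul_mem_iInter_closure_termTuples e)

variable (y) in
theorem exists_mul_oProd_mem_image {e : Ultrafilter S} (he : IsMinimalIdempotent e)
    {B : Set S} (hB : B ∈ e) (n m : ℕ) :
    ∃ (a : S) (α : Finset ℕ), α.Nonempty ∧ (∀ t ∈ α, m < t) ∧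
      ∀ l ≤ n, (a : WithOne S) * oProd (y l) α ∈ ((↑) : S → WithOne S) '' B := by
  have : Nonempty S := ⟨(Ultrafilter.nonempty_of_mem hB).some⟩
  have hopen : IsOpen (pi (Iic n) fun _ => {u : Ultrafilter S | B ∈ u}) :=
    isOpen_set_pi (finite_Iic n) fun _ _ => ultrafilter_isOpen_basic B
  obtain ⟨_, hB', c, ⟨a, α, hne, hgt, hc⟩, rfl⟩ := mem_closure_iff.1
    (mem_iInter.1 (const_mem_iInter_closure_termTuples y he) m) _ hopen fun _ _ => hB
  exact ⟨a, α, hne, hgt, fun l hl => ⟨c l, hB' l hl, hc l⟩⟩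

end CentralSets

theorem exists_seq_oListProd_mem {S : Type*} [Semigroup S] (y : ℕ → ℕ → S)
    {f : Filter (WithOne S)}
    (step : ∀ n, ∀ C ∈ f, ∀ m : ℕ, ∃ (a : S) (α : Finset ℕ), α.Nonempty ∧ (∀ t ∈ α, m < t) ∧
      ∀ l ≤ n, (a : WithOne S) * oProd (y l) α ∈ C ∧ {x | a * oProd (y l) α * x ∈ C} ∈ f)
    {C : Set (WithOne S)} (hC : C ∈ f) :
    ∃ (a : ℕ → S) (α : ℕ → Finset ℕ), (∀ n, (α n).Nonempty) ∧
      (∀ n, ∀ s ∈ α n, ∀ t ∈ α (n + 1), s < t) ∧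
      ∀ g : ℕ → ℕ, (∀ n, g n ≤ n) → ∀ β : Finset ℕ, β.Nonempty →
        oListProd (fun n => (a n : WithOne S) * oProd (y (g n)) (α n)) β ∈ C := by
  choose a α hne hgt hmem using fun n (s : {C // C ∈ f} × ℕ) => step n s.1 s.1.2 s.2
  let next (n : ℕ) (s : {C // C ∈ f} × ℕ) : {C // C ∈ f} × ℕ :=
    (⟨s.1.1 ∩ ⋂ l ∈ Iic n, {x | a n s * oProd (y l) (α n s) * x ∈ s.1.1},
      inter_mem s.1.2 ((biInter_mem (finite_Iic n)).2 fun l hl => (hmem n s l hl).2)⟩,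
     (α n s).sup id)
  obtain ⟨st, h0, hst⟩ : ∃ st : ℕ → {C // C ∈ f} × ℕ,
      st 0 = (⟨C, hC⟩, 0) ∧ ∀ n, st (n + 1) = next n (st n) :=
    ⟨fun n => Nat.rec (⟨C, hC⟩, 0) next n, rfl, fun _ => rfl⟩
  have hanti : Antitone fun n => ((st n).1 : Set (WithOne S)) :=
    antitone_nat_of_succ_le fun n => by rw [hst]; exact inter_subset_left
  have hmul : ∀ n, ∀ l ≤ n, ∀ x ∈ ((st (n + 1)).1 : Set (WithOne S)),
      a n (st n) * oProd (y l) (α n (st n)) * x ∈ ((st n).1 : Set (WithOne S)) := by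
    intro n l hl x hx
    rw [hst] at hx
    exact mem_iInter₂.1 hx.2 l hl
  refine ⟨fun n => a n (st n), fun n => α n (st n), fun n => hne n (st n), ?_, ?_⟩
  · intro n s hs t ht
    have hbound := hgt (n + 1) (st (n + 1)) t ht
    rw [hst] at hbound
    exact (Finset.le_sup (f := id) hs).trans_lt hbound
  · intro g hg β hβ
    have := oListProd_mem_of_antitone hanti (fun n => (hmem n (st n) (g n) (hg n)).1)
      (fun n => hmul n (g n) (hg n)) hβ fun i _ => Nat.zero_le i
    rwa [h0] at this

theorem exists_mul_oProd_mem_of_mem_map {S : Type*} [CommSemigroup S] {e : Ultrafilter S}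
    (he : IsMinimalIdempotent e) (y : ℕ → ℕ → S) (n : ℕ) (C : Set (WithOne S))
    (hC : C ∈ e.map (↑)) (m : ℕ) :
    ∃ (a : S) (α : Finset ℕ), α.Nonempty ∧ (∀ t ∈ α, m < t) ∧
      ∀ l ≤ n, (a : WithOne S) * oProd (y l) α ∈ C ∧
        {x | a * oProd (y l) α * x ∈ C} ∈ e.map (↑) := by
  rw [Ultrafilter.mem_map] at hC
  have hB : (↑) ⁻¹' C ∩ {s | {t | s * t ∈ (↑) ⁻¹' C} ∈ e} ∈ e :=
    inter_mem hC (by rwa [← he.1] at hC)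
  obtain ⟨a, α, hne, hgt, hmem⟩ := exists_mul_oProd_mem_image y he hB n m
  refine ⟨a, α, hne, hgt, fun l hl => ?_⟩
  obtain ⟨s, ⟨hsC, hsC'⟩, hs⟩ := hmem l hl
  rw [← hs]
  exact ⟨hsC, hsC'⟩

/-- **The Central Sets Theorem.**  Let `S` be a commutative semigroup, `e` a minimal
idempotent in `βS` and `A ∈ e`.  For each `l ∈ ℕ` let `⟨y l n⟩ₙ` be a sequence in `S`.
Then there are a sequence `⟨a n⟩ₙ` in `S` and a sequence `α 0 < α 1 < …` in `P_f(ω)`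
such that for every `g` with `g n ≤ n`,
`FP(⟨a n * ∏_{t∈α n} y (g n) t⟩ₙ) ⊆ A`. -/
theorem central_sets_theorem
    {S : Type*} [CommSemigroup S] (e : Ultrafilter S)
    (he : IsMinimalIdempotent e) (A : Set S) (hA : A ∈ e)
    (y : ℕ → ℕ → S) :
    ∃ (a : ℕ → S) (α : ℕ → Finset ℕ),
      (∀ n, (α n).Nonempty) ∧
      (∀ n, ∀ s ∈ α n, ∀ t ∈ α (n + 1), s < t) ∧
      ∀ g : ℕ → ℕ, (∀ n, g n ≤ n) →
        ∀ β : Finset ℕ, β.Nonempty →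
          ∃ p ∈ A, (p : WithOne S) =
            oListProd (fun n => (a n : WithOne S) * oProd (y (g n)) (α n)) β := by
  have hA' : (↑) '' A ∈ e.map ((↑) : S → WithOne S) := by
    rwa [Ultrafilter.mem_map, preimage_image_eq _ WithOne.coe_injective]
  exact exists_seq_oListProd_mem y (exists_mul_oProd_mem_of_mem_map he y) hA'
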